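/- Let Z be a compact metric space with diam(Z) < π and let C(Z) be the metric cone over Z with vertex z. Then C(Z) contains no line: there is no isometric embedding of ℝ into C(Z). -/
import Mathlib
set_option maxHeartbeats 1000000


/-- The cone distance on `C(Z)`: for points `(r, a)` and `(s, b)` of `[0,∞) × Z`,
`d((r,a),(s,b))² = r² + s² − 2 r s cos(min(d_Z(a,b), π))`.  All points `(0, a)` are at
mutual distance `0`: they represent the cone vertex. -/
noncomputable def coneDist {Z : Type*} [MetricSpace Z] (p q : ℝ × Z) : ℝ :=
  Real.sqrt (p.1 ^ 2 + q.1 ^ 2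
    - 2 * p.1 * q.1 * Real.cos (min (dist p.2 q.2) Real.pi))

/-- if `Z` is a compact metric space with `diam Z < π`, then the metric
cone `C(Z)` contains no line, i.e. there is no isometric embedding `φ : ℝ → C(Z)`
(`d(φ s, φ t) = |s − t|` for all `s, t`). -/
theorem stmt19 {Z : Type*} [MetricSpace Z] [CompactSpace Z]
    (hdiam : Metric.diam (Set.univ : Set Z) < Real.pi) :
    ¬ ∃ φ : ℝ → ℝ × Z, (∀ t, 0 ≤ (φ t).1) ∧
        ∀ s t : ℝ, coneDist (φ s) (φ t) = |s - t| := by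
  rintro ⟨φ, h0, hφ⟩
  set c : ℝ := Real.cos (Metric.diam (Set.univ : Set Z)) with hc_def
  have hdnn : (0:ℝ) ≤ Metric.diam (Set.univ : Set Z) := Metric.diam_nonneg
  have hc : -1 < c := by
    have := Real.cos_lt_cos_of_nonneg_of_le_pi hdnn le_rfl hdiam
    rw [Real.cos_pi] at this
    exact this
  have hc1 : c ≤ 1 := Real.cos_le_one _
  -- key fact packaging the cosine
  have key : ∀ s t : ℝ, ∃ co : ℝ, c ≤ co ∧ co ≤ 1 ∧
      (s - t) ^ 2 = (φ s).1 ^ 2 + (φ t).1 ^ 2 - 2 * (φ s).1 * (φ t).1 * co := by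
    intro s t
    set θ : ℝ := min (dist (φ s).2 (φ t).2) Real.pi with hθ
    refine ⟨Real.cos θ, ?_, Real.cos_le_one _, ?_⟩
    · have hd : dist (φ s).2 (φ t).2 ≤ Metric.diam (Set.univ : Set Z) :=
        Metric.dist_le_diam_of_mem isCompact_univ.isBounded (Set.mem_univ _)
          (Set.mem_univ _)
      have hθeq : θ = dist (φ s).2 (φ t).2 :=
        min_eq_left (le_trans hd hdiam.le)
      rw [hθeq]
      exact Real.cos_le_cos_of_nonneg_of_le_pi dist_nonneg hdiam.le hd
    · have hE : 0 ≤ (φ s).1 ^ 2 + (φ t).1 ^ 2 - 2 * (φ s).1 * (φ t).1 * Real.cos θ := by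
        nlinarith [Real.cos_le_one θ, mul_nonneg (h0 s) (h0 t), sq_nonneg ((φ s).1 - (φ t).1)]
      have h1 := hφ s t
      unfold coneDist at h1
      have h2 : ((s - t) : ℝ) ^ 2 = |s - t| ^ 2 := (sq_abs _).symm
      rw [h2, ← h1, Real.sq_sqrt hE]
  set r0 : ℝ := (φ 0).1 with hr0
  have hr0nn : 0 ≤ r0 := h0 0
  set T : ℝ := max 1 ((4 * r0 ^ 2 + 4 * r0 + 1) / (1 + c)) with hT
  have hT1 : (1:ℝ) ≤ T := le_max_left _ _
  have hTpos : (0:ℝ) < T := lt_of_lt_of_le one_pos hT1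
  have hδ : (0:ℝ) < 1 + c := by linarith
  have hT2 : 4 * r0 ^ 2 + 4 * r0 + 1 ≤ (1 + c) * T := by
    have := le_max_right 1 ((4 * r0 ^ 2 + 4 * r0 + 1) / (1 + c))
    calc 4 * r0 ^ 2 + 4 * r0 + 1 = (4 * r0 ^ 2 + 4 * r0 + 1) / (1 + c) * (1 + c) := by
          field_simp
      _ ≤ T * (1 + c) := mul_le_mul_of_nonneg_right this hδ.le
      _ = (1 + c) * T := by ring
  set a : ℝ := (φ T).1 with ha_def
  set b : ℝ := (φ (-T)).1 with hb_def
  have hann : 0 ≤ a := h0 T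
  have hbnn : 0 ≤ b := h0 (-T)
  -- bounds on a and b
  obtain ⟨co1, hco1c, hco11, hco1⟩ := key T 0
  have haub : a ≤ T + r0 := by nlinarith [mul_nonneg (mul_nonneg hann hr0nn) (by linarith : (0:ℝ) ≤ 1 - co1)]
  have halb : T - r0 ≤ a := by nlinarith [mul_nonneg (mul_nonneg hann hr0nn) (by linarith : (0:ℝ) ≤ co1 + 1)]
  obtain ⟨co2, hco2c, hco21, hco2⟩ := key (-T) 0
  have hbub : b ≤ T + r0 := by nlinarith [mul_nonneg (mul_nonneg hbnn hr0nn) (by linarith : (0:ℝ) ≤ 1 - co2)]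
  have hblb : T - r0 ≤ b := by nlinarith [mul_nonneg (mul_nonneg hbnn hr0nn) (by linarith : (0:ℝ) ≤ co2 + 1)]
  -- main equation between φ T and φ (-T)
  obtain ⟨co3, hco3c, hco31, hco3⟩ := key T (-T)
  -- (2T)^2 = a^2 + b^2 - 2 a b co3 ≤ (a-b)^2 + 2ab(1-c)
  have hab : a * b ≤ (T + r0) ^ 2 := by
    rw [sq]; exact mul_le_mul haub hbub hbnn (by linarith)
  have habd : (a - b) ^ 2 ≤ (2 * r0) ^ 2 := sq_le_sq' (by linarith) (by linarith)
  have heq : 4 * T ^ 2 = a ^ 2 + b ^ 2 - 2 * a * b * co3 := by linear_combination hco3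
  have hf3 : 0 ≤ a * b * (co3 - c) :=
    mul_nonneg (mul_nonneg hann hbnn) (by linarith)
  have hf4 : 0 ≤ (1 - c) * ((T + r0) ^ 2 - a * b) :=
    mul_nonneg (by linarith) (by linarith)
  have hmain : 4 * T ^ 2 ≤ 4 * r0 ^ 2 + 2 * (1 - c) * (T + r0) ^ 2 := by
    linarith [heq, habd, hf3, hf4]
  -- derive contradiction
  have hg1 : (4 * r0 ^ 2 + 4 * r0 + 1) * T ≤ (1 + c) * T * T :=
    mul_le_mul_of_nonneg_right hT2 hTpos.le
  have hg2 : 0 ≤ (1 + c) * (2 * T * r0 + r0 ^ 2) :=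
    mul_nonneg hδ.le (by nlinarith [mul_nonneg hTpos.le hr0nn])
  have hg3 : r0 ^ 2 * 1 ≤ r0 ^ 2 * T :=
    mul_le_mul_of_nonneg_left hT1 (sq_nonneg r0)
  have hg4 : 0 ≤ T * r0 := mul_nonneg hTpos.le hr0nn
  nlinarith [hmain, hg1, hg2, hg3, hg4, mul_le_mul_of_nonneg_right hT1 hr0nn]
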